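/- For every nondeterministic co-Büchi automaton A with n states there is a deterministic Büchi automaton A' with at most 3^n states such that L(A') equals the complement of L(A). -/

import Mathlib

/-- A nondeterministic parity automaton over the alphabet `A`: a finite set of
states, an initial state, a transition relation and a priority function. -/
structure NPA (A : Type) where
  Q : Type
  fin : Fintype Q
  init : Q
  trans : Q → A → Q → Prop
  prio : Q → ℕ

attribute [instance] NPA.fin

namespace NPA

variable {A : Type}

/-- The size of an automaton is the number of its states. -/
def size (M : NPA A) : ℕ := Fintype.card M.Q

/-- The index of a parity automaton is the number of distinct priorities. -/
def index (M : NPA A) : ℕ := (Finset.univ.image M.prio).card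

/-- A run of the automaton on an ω-word. -/
def IsRun (M : NPA A) (w : ℕ → A) (ρ : ℕ → M.Q) : Prop :=
  ρ 0 = M.init ∧ ∀ i, M.trans (ρ i) (w i) (ρ (i + 1))

/-- A run is accepting iff the maximal priority of a state occurring infinitely
often in it is even. -/
def AcceptingRun (M : NPA A) (ρ : ℕ → M.Q) : Prop :=
  ∃ p : ℕ, Even p ∧ (∃ q : M.Q, M.prio q = p ∧ {i | ρ i = q}.Infinite) ∧
    ∀ q : M.Q, {i | ρ i = q}.Infinite → M.prio q ≤ p

/-- The ω-language of the automaton. -/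
def Lang (M : NPA A) : Set (ℕ → A) :=
  {w | ∃ ρ : ℕ → M.Q, M.IsRun w ρ ∧ M.AcceptingRun ρ}

/-- The automaton is deterministic: exactly one transition per state and letter. -/
def Deterministic (M : NPA A) : Prop :=
  ∀ (q : M.Q) (a : A), ∃! q' : M.Q, M.trans q a q'

/-- A Büchi automaton: all priorities are `1` or `2`. -/
def IsBuchi (M : NPA A) : Prop := ∀ q : M.Q, M.prio q = 1 ∨ M.prio q = 2

/-- A co-Büchi automaton: all priorities are `0` or `1`. -/
def IsCoBuchi (M : NPA A) : Prop := ∀ q : M.Q, M.prio q = 0 ∨ M.prio q = 1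

end NPA

/-!
Miyano–Hayashi breakpoint construction. After reading a prefix, the deterministic automaton
stores the set `S` of states reachable by runs of `M` and the subset `O ⊆ S` of those reachable by
runs that have seen only priority `0` since the last breakpoint, a position where `O` was empty
and is refilled from `S`. Such a pair is a map `M.Q → Fin 3`, whence the bound `3 ^ n`.
An accepting run of `M` eventually avoids priority `1`, is then caught in `O` at the next
breakpoint and never leaves it, so breakpoints stop. Conversely, once breakpoints stop, every
state of `O` has a predecessor in the previous `O`, and Kőnig's lemma gives an infinite run that
eventually stays in `O`, hence is accepting. Declaring the breakpoints Büchi-accepting therefore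
recognises the complement.
-/

open Filter

theorem Filter.Frequently.exists_frequently_eq {ι Q : Type*} [Finite Q] {l : Filter ι}
    {ρ : ι → Q} {P : Q → Prop} (h : ∃ᶠ i in l, P (ρ i)) : ∃ q, P q ∧ ∃ᶠ i in l, ρ i = q := by
  obtain ⟨q, hq⟩ := frequently_exists.mp
    (h.mono fun i hi => (⟨ρ i, hi, rfl⟩ : ∃ q, P q ∧ ρ i = q))
  exact ⟨q, frequently_and_distrib_left.mp hq⟩

theorem exists_forall_mem_of_antitone {Q : Type*} [Finite Q] {S : ℕ → Set Q} (hS : Antitone S)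
    (hne : ∀ k, (S k).Nonempty) : ∃ q, ∀ k, q ∈ S k := by
  choose a ha using hne
  obtain ⟨q, hq⟩ := frequently_exists.mp
    (Frequently.of_forall fun k => ⟨a k, rfl⟩ : ∃ᶠ k in atTop, ∃ q, a k = q)
  refine ⟨q, fun k => ?_⟩
  obtain ⟨k', hkk', rfl⟩ := frequently_atTop.mp hq k
  exact hS hkk' (ha k')

section Konig

variable {Q : Type*} (X : ℕ → Set Q) (R : ℕ → Q → Q → Prop)

def Extendable : ℕ → ℕ → Q → Prop
  | 0, n, a => a ∈ X n
  | k + 1, n, a => a ∈ X n ∧ ∃ b, R n a b ∧ Extendable k (n + 1) b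

variable {X R}

theorem Extendable.mem {k n : ℕ} {a : Q} (h : Extendable X R k n a) : a ∈ X n := by
  cases k with
  | zero => exact h
  | succ k => exact h.1

theorem Extendable.of_succ {k n : ℕ} {a : Q} (h : Extendable X R (k + 1) n a) :
    Extendable X R k n a := by
  induction k generalizing n a with
  | zero => exact h.1
  | succ k ih =>
    obtain ⟨ha, b, hab, hb⟩ := h
    exact ⟨ha, b, hab, ih hb⟩

theorem antitone_extendable (n : ℕ) : Antitone fun k => {a | Extendable X R k n a} :=
  antitone_nat_of_succ_le fun _ _ => Extendable.of_succ

theorem exists_extendable (hR : ∀ n, ∀ b ∈ X (n + 1), ∃ a ∈ X n, R n a b) {k n : ℕ}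
    (hne : (X (n + k)).Nonempty) : ∃ a, Extendable X R k n a := by
  induction k generalizing n with
  | zero => exact hne
  | succ k ih =>
    obtain ⟨b, hb⟩ := ih (n := n + 1) (by rwa [Nat.add_right_comm])
    obtain ⟨a, ha, hab⟩ := hR n b hb.mem
    exact ⟨a, ha, b, hab, hb⟩

theorem exists_seq_of_frequently_nonempty [Finite Q] (hX : ∃ᶠ n in atTop, (X n).Nonempty)
    (hR : ∀ n, ∀ b ∈ X (n + 1), ∃ a ∈ X n, R n a b) :
    ∃ σ : ℕ → Q, (∀ n, σ n ∈ X n) ∧ ∀ n, R n (σ n) (σ (n + 1)) := by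
  have hext : ∀ k n, ∃ a, Extendable X R k n a := by
    intro k n
    obtain ⟨m, hm, hXm⟩ := frequently_atTop.mp hX (n + k)
    obtain ⟨j, rfl⟩ := Nat.exists_eq_add_of_le (le_of_add_le_left hm)
    obtain ⟨a, ha⟩ := exists_extendable hR hXm
    exact ⟨a, antitone_extendable n (Nat.le_of_add_le_add_left hm) ha⟩
  have hstep : ∀ n a, (∀ k, Extendable X R k n a) →
      ∃ b, R n a b ∧ ∀ k, Extendable X R k (n + 1) b := by
    intro n a ha
    obtain ⟨b, hb⟩ := exists_forall_mem_of_antitone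
      (S := fun k => {b | R n a b ∧ Extendable X R k (n + 1) b})
      (fun k k' hkk' b hb => ⟨hb.1, antitone_extendable (n + 1) hkk' hb.2⟩)
      (fun k => (ha (k + 1)).2)
    exact ⟨b, (hb 0).1, fun k => (hb k).2⟩
  obtain ⟨a₀, ha₀⟩ := exists_forall_mem_of_antitone (antitone_extendable 0) (hext · 0)
  choose! next hnext using hstep
  let σ : ℕ → Q := fun n => Nat.rec a₀ next n
  have hσ : ∀ n k, Extendable X R k n (σ n) := by
    intro n
    induction n with
    | zero => exact ha₀
    | succ n ih => exact (hnext n (σ n) ih).2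
  exact ⟨σ, fun n => hσ n 0, fun n => (hnext n (σ n) (hσ n)).1⟩

end Konig

namespace NPA

variable {A : Type} {M : NPA A}

theorem acceptingRun_iff_frequently_prio_eq_two (hM : M.IsBuchi) {ρ : ℕ → M.Q} :
    M.AcceptingRun ρ ↔ ∃ᶠ i in atTop, M.prio (ρ i) = 2 := by
  simp only [AcceptingRun, ← Nat.frequently_atTop_iff_infinite]
  constructor
  · rintro ⟨p, hp, ⟨q, rfl, hq⟩, -⟩
    have h2 : M.prio q = 2 := by
      rcases hM q with h | h
      · exact absurd hp (by rw [h]; decide)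
      · exact h
    exact hq.mono fun i hi => hi ▸ h2
  · intro h
    obtain ⟨q, hq2, hq⟩ := h.exists_frequently_eq (P := fun q => M.prio q = 2)
    exact ⟨2, even_two, ⟨q, hq2, hq⟩, fun q' _ => (hM q').elim (·.le.trans one_le_two) (·.le)⟩

theorem AcceptingRun.eventually_prio_eq_zero (hM : M.IsCoBuchi) {ρ : ℕ → M.Q}
    (h : M.AcceptingRun ρ) : ∀ᶠ i in atTop, M.prio (ρ i) = 0 := by
  simp only [AcceptingRun, ← Nat.frequently_atTop_iff_infinite] at h
  obtain ⟨p, hp, ⟨q, rfl, -⟩, hmax⟩ := h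
  by_contra hne
  obtain ⟨q', hq'0, hq'⟩ := (not_eventually.mp hne).exists_frequently_eq
    (P := fun q => M.prio q ≠ 0)
  have hq0 : M.prio q = 0 := by
    rcases hM q with h | h
    · exact h
    · exact absurd hp (by rw [h]; decide)
  exact hq'0 (Nat.le_zero.mp (hq0 ▸ hmax q' hq'))

theorem acceptingRun_of_eventually_prio_eq_zero {ρ : ℕ → M.Q}
    (h : ∀ᶠ i in atTop, M.prio (ρ i) = 0) : M.AcceptingRun ρ := by
  simp only [AcceptingRun, ← Nat.frequently_atTop_iff_infinite]
  obtain ⟨q, hq0, hq⟩ := h.frequently.exists_frequently_eq (P := fun q => M.prio q = 0)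
  refine ⟨0, Even.zero, ⟨q, hq0, hq⟩, fun q' hq' => ?_⟩
  obtain ⟨i, rfl, hi⟩ := (hq'.and_eventually h).exists
  exact hi.le

theorem Deterministic.isRun_unique (hM : M.Deterministic) {w : ℕ → A}
    {ρ ρ' : ℕ → M.Q} (hρ : M.IsRun w ρ) (hρ' : M.IsRun w ρ') : ρ = ρ' := by
  funext n
  induction n with
  | zero => exact hρ.1.trans hρ'.1.symm
  | succ n ih => exact (hM (ρ n) (w n)).unique (hρ.2 n) (ih ▸ hρ'.2 n)

theorem Deterministic.mem_lang_iff (hM : M.Deterministic) {w : ℕ → A}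
    {ρ : ℕ → M.Q} (hρ : M.IsRun w ρ) : w ∈ M.Lang ↔ M.AcceptingRun ρ :=
  ⟨fun ⟨_, hρ', hacc⟩ => hM.isRun_unique hρ hρ' ▸ hacc, fun h => ⟨ρ, hρ, h⟩⟩

variable (M)

open Classical in
/-- A state `f` encodes the pair `O ⊆ S` with `S = {q | f q ≠ 0}` and `O = {q | f q = 2}`. The new
`O` consists of the priority-`0` successors of `O`, or of `S` when `O` is empty. -/
noncomputable def breakpointStep (f : M.Q → Fin 3) (a : A) : M.Q → Fin 3 := fun q' =>
  if M.prio q' = 0 ∧ ∃ q, f q ≠ 0 ∧ ((∃ p, f p = 2) → f q = 2) ∧ M.trans q a q' then 2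
  else if ∃ q, f q ≠ 0 ∧ M.trans q a q' then 1 else 0

open Classical in
noncomputable def breakpoint : NPA A where
  Q := M.Q → Fin 3
  fin := inferInstance
  init q := if q = M.init then 1 else 0
  trans f a f' := f' = M.breakpointStep f a
  prio f := if ∃ q, f q = 2 then 1 else 2

noncomputable def breakpointRun (w : ℕ → A) : ℕ → M.breakpoint.Q
  | 0 => M.breakpoint.init
  | n + 1 => M.breakpointStep (breakpointRun w n) (w n)

theorem breakpoint_deterministic : M.breakpoint.Deterministic :=
  fun f a => ⟨M.breakpointStep f a, rfl, fun _ h => h⟩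

theorem breakpoint_isBuchi : M.breakpoint.IsBuchi := by
  intro f
  by_cases h : ∃ q, f q = 2 <;> simp [breakpoint, h]

theorem breakpoint_size : M.breakpoint.size = 3 ^ M.size := by
  classical
  rw [size, size, breakpoint, Fintype.card_fun, Fintype.card_fin]

theorem breakpoint_prio_eq_two_iff (f : M.breakpoint.Q) :
    M.breakpoint.prio f = 2 ↔ ¬∃ q, f q = 2 := by
  by_cases h : ∃ q, f q = 2 <;> simp [breakpoint, h]

variable {M}

theorem breakpointStep_ne_zero_iff {f : M.Q → Fin 3} {a : A} {q' : M.Q} :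
    M.breakpointStep f a q' ≠ 0 ↔ ∃ q, f q ≠ 0 ∧ M.trans q a q' := by
  unfold breakpointStep
  split_ifs with hO hS
  · obtain ⟨-, q, hq, -, hqq'⟩ := hO
    exact iff_of_true (by decide) ⟨q, hq, hqq'⟩
  · exact iff_of_true (by decide) hS
  · exact iff_of_false (by decide) hS

theorem breakpointStep_eq_two_iff {f : M.Q → Fin 3} {a : A} {q' : M.Q} :
    M.breakpointStep f a q' = 2 ↔
      M.prio q' = 0 ∧ ∃ q, f q ≠ 0 ∧ ((∃ p, f p = 2) → f q = 2) ∧ M.trans q a q' := by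
  unfold breakpointStep
  split_ifs with hO hS
  · exact iff_of_true rfl hO
  · exact iff_of_false (by decide) hO
  · exact iff_of_false (by decide) hO

variable {w : ℕ → A}

theorem isRun_breakpointRun : M.breakpoint.IsRun w (M.breakpointRun w) :=
  ⟨rfl, fun _ => rfl⟩

theorem mem_breakpoint_lang_iff :
    w ∈ M.breakpoint.Lang ↔ ∃ᶠ n in atTop, ¬∃ q, M.breakpointRun w n q = 2 := by
  rw [M.breakpoint_deterministic.mem_lang_iff isRun_breakpointRun,
    acceptingRun_iff_frequently_prio_eq_two M.breakpoint_isBuchi]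
  simp only [breakpoint_prio_eq_two_iff]

theorem breakpointRun_zero_ne_zero_iff {q : M.Q} : M.breakpointRun w 0 q ≠ 0 ↔ q = M.init := by
  by_cases h : q = M.init <;> simp [breakpointRun, breakpoint, h]

theorem prio_eq_zero_of_breakpointRun_eq_two {n : ℕ} {q : M.Q}
    (h : M.breakpointRun w n q = 2) : M.prio q = 0 := by
  cases n with
  | zero => by_cases hq : q = M.init <;> simp [breakpointRun, breakpoint, hq] at h
  | succ n => exact (breakpointStep_eq_two_iff.mp h).1

theorem breakpointRun_ne_zero_of_isRun {ρ : ℕ → M.Q} (hρ : M.IsRun w ρ) (n : ℕ) :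
    M.breakpointRun w n (ρ n) ≠ 0 := by
  induction n with
  | zero => exact breakpointRun_zero_ne_zero_iff.mpr hρ.1
  | succ n ih => exact breakpointStep_ne_zero_iff.mpr ⟨ρ n, ih, hρ.2 n⟩

theorem breakpointRun_succ_eq_two_of_isRun {ρ : ℕ → M.Q} (hρ : M.IsRun w ρ) {n : ℕ}
    (hprio : M.prio (ρ (n + 1)) = 0)
    (hO : (¬∃ q, M.breakpointRun w n q = 2) ∨ M.breakpointRun w n (ρ n) = 2) :
    M.breakpointRun w (n + 1) (ρ (n + 1)) = 2 := by
  refine breakpointStep_eq_two_iff.mpr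
    ⟨hprio, ρ n, breakpointRun_ne_zero_of_isRun hρ n, ?_, hρ.2 n⟩
  exact fun hne => hO.resolve_left (not_not_intro hne)

theorem eventually_exists_breakpointRun_eq_two {ρ : ℕ → M.Q} (hρ : M.IsRun w ρ)
    (h0 : ∀ᶠ i in atTop, M.prio (ρ i) = 0) :
    ∀ᶠ n in atTop, ∃ q, M.breakpointRun w n q = 2 := by
  obtain ⟨t, ht⟩ := eventually_atTop.mp h0
  by_cases hb : ∃ n ≥ t, ¬∃ q, M.breakpointRun w n q = 2
  · obtain ⟨n, hn, hbn⟩ := hb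
    have hin : ∀ m ≥ n + 1, M.breakpointRun w m (ρ m) = 2 := by
      intro m hm
      induction m, hm using Nat.le_induction with
      | base => exact breakpointRun_succ_eq_two_of_isRun hρ (ht _ (by omega)) (.inl hbn)
      | succ m hm ih => exact breakpointRun_succ_eq_two_of_isRun hρ (ht _ (by omega)) (.inr ih)
    exact eventually_atTop.mpr ⟨n + 1, fun m hm => ⟨ρ m, hin m hm⟩⟩
  · push Not at hb
    exact eventually_atTop.mpr ⟨t, hb⟩

theorem mem_lang_of_eventually_exists_breakpointRun_eq_two
    (h : ∀ᶠ n in atTop, ∃ q, M.breakpointRun w n q = 2) : w ∈ M.Lang := by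
  obtain ⟨t, ht⟩ := eventually_atTop.mp h
  obtain ⟨σ, hσX, hσR⟩ := exists_seq_of_frequently_nonempty
    (X := fun n => {q | M.breakpointRun w n q ≠ 0 ∧ (t ≤ n → M.breakpointRun w n q = 2)})
    (R := fun n q q' => M.trans q (w n) q')
    (eventually_atTop.mpr ⟨t, fun n hn => by
      obtain ⟨q, hq⟩ := ht n hn
      exact ⟨q, by simp [hq], fun _ => hq⟩⟩).frequently
    (by
      rintro n b ⟨hb, hbO⟩
      by_cases htn : t ≤ n
      · obtain ⟨-, q, hq, hqO, hqb⟩ := breakpointStep_eq_two_iff.mp (hbO (by omega))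
        exact ⟨q, ⟨hq, fun _ => hqO (ht n htn)⟩, hqb⟩
      · obtain ⟨q, hq, hqb⟩ := breakpointStep_ne_zero_iff.mp hb
        exact ⟨q, ⟨hq, fun h => absurd h htn⟩, hqb⟩)
  refine ⟨σ, ⟨breakpointRun_zero_ne_zero_iff.mp (hσX 0).1, hσR⟩,
    acceptingRun_of_eventually_prio_eq_zero ?_⟩
  exact eventually_atTop.mpr ⟨t, fun n hn => prio_eq_zero_of_breakpointRun_eq_two ((hσX n).2 hn)⟩

theorem mem_lang_iff_eventually_exists_breakpointRun_eq_two (hM : M.IsCoBuchi) :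
    w ∈ M.Lang ↔ ∀ᶠ n in atTop, ∃ q, M.breakpointRun w n q = 2 :=
  ⟨fun ⟨_, hρ, hacc⟩ =>
    eventually_exists_breakpointRun_eq_two hρ (hacc.eventually_prio_eq_zero hM),
    mem_lang_of_eventually_exists_breakpointRun_eq_two⟩

end NPA

theorem ncoba_complementation_determinisation_general (A : Type) (M : NPA A)
    (hc : M.IsCoBuchi) :
    ∃ M' : NPA A, M'.Deterministic ∧ M'.IsBuchi ∧ M'.size ≤ 3 ^ M.size ∧
      M'.Lang = M.Langᶜ := by
  refine ⟨M.breakpoint, M.breakpoint_deterministic, M.breakpoint_isBuchi, M.breakpoint_size.le, ?_⟩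
  ext w
  rw [NPA.mem_breakpoint_lang_iff, Set.mem_compl_iff,
    NPA.mem_lang_iff_eventually_exists_breakpointRun_eq_two hc, not_eventually]

/-- **Theorem (Miyano-Hayashi).** For every NcoBA with `n` states there is a DBA
with at most `3^n` states recognising the complement language. -/
theorem ncoba_complementation_determinisation (A : Type) [Fintype A] (M : NPA A)
    (hc : M.IsCoBuchi) :
    ∃ M' : NPA A, M'.Deterministic ∧ M'.IsBuchi ∧ M'.size ≤ 3 ^ M.size ∧
      M'.Lang = M.Langᶜ :=
  ncoba_complementation_determinisation_general A M hc
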